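/- Let Σ be a symmetric positive definite q×q real matrix and P a q×q real matrix satisfying P·P = P and Σ⁻¹·P = Pᵀ·Σ⁻¹, and set Σ' := P·Σ·Pᵀ. Then for every real m×q matrix A, the matrix A·Σ·Aᵀ − A·Σ'·Aᵀ is positive semidefinite; i.e., the first-order propagated covariance Σ_x̄ = A Σ Aᵀ of a localization estimator dominates the propagated covariance Σ'_x̄ = A Σ' Aᵀ obtained from denoised measurements. -/

import Mathlib

/-!
`Σ⁻¹ P = Pᵀ Σ⁻¹` says that `P` is self-adjoint for the inner product `⟨x, y⟩ = xᵀ Σ⁻¹ y`,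
i.e. `P Σ = Σ Pᵀ`. Together with `P² = P` this gives `P Σ Pᵀ = P Σ`, whence
`Σ - P Σ Pᵀ = (1 - P) Σ (1 - P)ᵀ` is positive semidefinite, and so is its congruence by `A`.
-/

open Matrix

theorem sub_mul_mul_star_eq_of_isIdempotentElem {R : Type*} [Ring R] [StarRing R] {a p : R}
    (hp : IsIdempotentElem p) (hpa : p * a = a * star p) :
    a - p * a * star p = (1 - p) * a * star (1 - p) := by
  have hpap : p * a * star p = p * a := by
    rw [mul_assoc, ← hpa, ← mul_assoc, hp.eq]
  simp only [star_sub, star_one, sub_mul, mul_sub, one_mul, mul_one, ← hpa, hpap]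
  abel

namespace Matrix

variable {n R : Type*} [Fintype n] [DecidableEq n]

theorem mul_eq_mul_of_inv_mul_eq_mul_inv [CommRing R] {S P Q : Matrix n n R}
    (hS : IsUnit S) (h : S⁻¹ * P = Q * S⁻¹) : P * S = S * Q := by
  rw [isUnit_iff_isUnit_det] at hS
  calc P * S = S * (S⁻¹ * P) * S := by rw [mul_nonsing_inv_cancel_left _ _ hS]
    _ = S * Q := by rw [h, Matrix.mul_assoc, Matrix.mul_assoc, nonsing_inv_mul _ hS,
      Matrix.mul_one]

theorem PosSemidef.sub_mul_mul_conjTranspose_of_isIdempotentElem [CommRing R] [PartialOrder R]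
    [StarRing R] [StarOrderedRing R] {S P : Matrix n n R} (hS : S.PosSemidef)
    (hP : IsIdempotentElem P) (hPS : P * S = S * Pᴴ) : (S - P * S * Pᴴ).PosSemidef := by
  rw [← star_eq_conjTranspose] at hPS ⊢
  rw [sub_mul_mul_star_eq_of_isIdempotentElem hP hPS]
  exact hS.mul_mul_conjTranspose_same (1 - P)

end Matrix

theorem propagated_covariance_dominates_general (q m : ℕ)
    (Sg P : Matrix (Fin q) (Fin q) ℝ) (hSgPd : Sg.PosDef)
    (hPidem : P * P = P) (hPsa : Sg⁻¹ * P = Pᵀ * Sg⁻¹)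
    (A : Matrix (Fin m) (Fin q) ℝ) :
    ∀ v : Fin m → ℝ, 0 ≤ v ⬝ᵥ ((A * Sg * Aᵀ - A * (P * Sg * Pᵀ) * Aᵀ) *ᵥ v) := by
  intro v
  have hPS : P * Sg = Sg * Pᴴ :=
    mul_eq_mul_of_inv_mul_eq_mul_inv hSgPd.isUnit hPsa
  have hdiff : (Sg - P * Sg * Pᴴ).PosSemidef :=
    hSgPd.posSemidef.sub_mul_mul_conjTranspose_of_isIdempotentElem hPidem hPS
  have hcongr : A * (Sg - P * Sg * Pᵀ) * Aᵀ = A * Sg * Aᵀ - A * (P * Sg * Pᵀ) * Aᵀ := by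
    rw [Matrix.mul_sub, Matrix.sub_mul]
  simpa [hcongr] using (hdiff.mul_mul_conjTranspose_same A).dotProduct_mulVec_nonneg v

/-- Let `Σ` be a symmetric positive definite `q×q` real matrix and
`P` a `q×q` real matrix satisfying `P·P = P` and `Σ⁻¹·P = Pᵀ·Σ⁻¹`, and set
`Σ' := P·Σ·Pᵀ`. Then for every real `m×q` matrix `A`, the matrix
`A·Σ·Aᵀ − A·Σ'·Aᵀ` is positive semidefinite; i.e., the first-order propagated
covariance `Σ_x̄ = A Σ Aᵀ` of a localization estimator dominates the propagated
covariance `Σ'_x̄ = A Σ' Aᵀ` obtained from denoised measurements. -/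
theorem propagated_covariance_dominates (q m : ℕ)
    (Sg P : Matrix (Fin q) (Fin q) ℝ) (hSgSymm : Sg.IsSymm) (hSgPd : Sg.PosDef)
    (hPidem : P * P = P) (hPsa : Sg⁻¹ * P = Pᵀ * Sg⁻¹)
    (A : Matrix (Fin m) (Fin q) ℝ) :
    ∀ v : Fin m → ℝ, 0 ≤ v ⬝ᵥ ((A * Sg * Aᵀ - A * (P * Sg * Pᵀ) * Aᵀ) *ᵥ v) :=
  propagated_covariance_dominates_general q m Sg P hSgPd hPidem hPsa A
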